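/- Suppose κ is a measurable cardinal, the supercompact cardinals below κ are unbounded in κ, and κ is 2^κ-supercompact. Then there exists a cardinal δ < κ such that δ is measurable and the supercompact cardinals below δ are unbounded in δ (i.e., κ is not the least measurable limit of supercompact cardinals). -/

import Mathlib

open Cardinal Set

/-- `𝒫_κ(λ)`: the collection of subsets of `λ` (identified with its set of
ordinals `{α | α < ord λ}`) of cardinality less than `κ`. -/
def SmallSet (κ lam : Cardinal.{0}) : Set (Set Ordinal.{0}) :=
  {x | x ⊆ Set.Iio lam.ord ∧ #x < Cardinal.lift.{1} κ}

/-- An ultrafilter is `κ`-complete if the intersection of any family of fewer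
than `κ` of its members again belongs to it. -/
def KComplete {X : Type*} (κ : Cardinal.{0}) (U : Ultrafilter X) : Prop :=
  ∀ (ι : Type) (A : ι → Set X), #ι < κ → (∀ i, A i ∈ U) → (⋂ i, A i) ∈ U

/-- An ultrafilter is nonprincipal if it contains no singleton. -/
def Nonprincipal {X : Type*} (U : Ultrafilter X) : Prop :=
  ∀ a : X, {a} ∉ U

/-- A cardinal `κ` is measurable if it is uncountable and carries a
`κ`-complete nonprincipal ultrafilter. -/
def IsMeasurableCard (κ : Cardinal.{0}) : Prop :=
  ℵ₀ < κ ∧ ∃ U : Ultrafilter ↥(Set.Iio κ.ord), KComplete κ U ∧ Nonprincipal U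

/-- An ultrafilter on `𝒫_κ(λ)` is fine if for every `α < λ` the set
`{x | α ∈ x}` belongs to it. -/
def Fine (κ lam : Cardinal.{0}) (U : Ultrafilter ↥(SmallSet κ lam)) : Prop :=
  ∀ α < lam.ord, {x : ↥(SmallSet κ lam) | α ∈ (x : Set Ordinal)} ∈ U

/-- `κ` is `λ`-strongly compact: there is a `κ`-complete fine ultrafilter on `𝒫_κ(λ)`. -/
def IsStronglyCompactTo (κ lam : Cardinal.{0}) : Prop :=
  ∃ U : Ultrafilter ↥(SmallSet κ lam), KComplete κ U ∧ Fine κ lam U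

/-- `κ` is strongly compact: `λ`-strongly compact for every `λ ≥ κ`. -/
def IsStronglyCompactCard (κ : Cardinal.{0}) : Prop :=
  ∀ lam, κ ≤ lam → IsStronglyCompactTo κ lam

/-- An ultrafilter on `𝒫_κ(λ)` is normal if every function `f : 𝒫_κ(λ) → λ`
with `f x ∈ x` almost everywhere is constant on a set in the ultrafilter. -/
def NormalUF (κ lam : Cardinal.{0}) (U : Ultrafilter ↥(SmallSet κ lam)) : Prop :=
  ∀ f : ↥(SmallSet κ lam) → Ordinal, (∀ x, f x < lam.ord) →
    {x : ↥(SmallSet κ lam) | f x ∈ (x : Set Ordinal)} ∈ U →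
    ∃ γ : Ordinal, {x : ↥(SmallSet κ lam) | f x = γ} ∈ U

/-- `κ` is `λ`-supercompact: there is a `κ`-complete normal fine ultrafilter on `𝒫_κ(λ)`. -/
def IsSupercompactTo (κ lam : Cardinal.{0}) : Prop :=
  ∃ U : Ultrafilter ↥(SmallSet κ lam), KComplete κ U ∧ NormalUF κ lam U ∧ Fine κ lam U

/-- `κ` is supercompact: `λ`-supercompact for every `λ ≥ κ`. -/
def IsSupercompactCard (κ : Cardinal.{0}) : Prop :=
  ∀ lam, κ ≤ lam → IsSupercompactTo κ lam

lemma press {κ lam : Cardinal.{0}} {U : Ultrafilter ↥(SmallSet κ lam)}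
    (hlam : (0:Ordinal) < lam.ord)
    (hnorm : NormalUF κ lam U) {M : Set ↥(SmallSet κ lam)} (hM : M ∈ U)
    (f : ↥(SmallSet κ lam) → Ordinal)
    (hf : ∀ x ∈ M, f x ∈ (x : Set Ordinal)) :
    ∃ γ : Ordinal, {x | x ∈ M ∧ f x = γ} ∈ U := by
  classical
  set f' : ↥(SmallSet κ lam) → Ordinal := fun x => if x ∈ M then f x else 0 with hf'
  have h1 : ∀ x, f' x < lam.ord := by
    intro x; by_cases h : x ∈ M <;> simp only [f', h, if_true, if_false]
    · exact x.2.1 (hf x h)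
    · exact hlam
  have h2 : {x : ↥(SmallSet κ lam) | f' x ∈ (x : Set Ordinal)} ∈ U :=
    Filter.mem_of_superset hM (by intro x hx; simp only [Set.mem_setOf_eq, f', hx, if_true]; exact hf x hx)
  obtain ⟨γ, hγ⟩ := hnorm f' h1 h2
  refine ⟨γ, Filter.mem_of_superset (Filter.inter_mem hM hγ) ?_⟩
  rintro x ⟨hxM, hxγ⟩
  refine ⟨hxM, ?_⟩
  simpa only [Set.mem_setOf_eq, f', hxM, if_true] using hxγ

lemma kcSet {κ lam : Cardinal.{0}} {U : Ultrafilter ↥(SmallSet κ lam)}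
    (hc : KComplete κ U) (s : Set Ordinal.{0}) (hs : #s < Cardinal.lift.{1} κ)
    (A : Ordinal → Set ↥(SmallSet κ lam)) (hA : ∀ γ ∈ s, A γ ∈ U) :
    {x | ∀ γ ∈ s, x ∈ A γ} ∈ U := by
  obtain ⟨c, hc', hce⟩ := Cardinal.lt_lift_iff.mp hs
  have he : Nonempty (c.out ≃ ↥s) := by
    rw [← Cardinal.lift_mk_eq', Cardinal.mk_out, Cardinal.lift_uzero]
    exact hce
  obtain ⟨e⟩ := he
  have hmem : (⋂ i : c.out, A ((e i : Ordinal))) ∈ U :=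
    hc c.out _ (by rw [Cardinal.mk_out]; exact hc') (fun i => hA _ (e i).2)
  refine Filter.mem_of_superset hmem ?_
  intro x hx γ hγ
  have := Set.mem_iInter.mp hx (e.symm ⟨γ, hγ⟩)
  simpa using this
lemma sc_aleph0_lt {δ : Cardinal.{0}} (h : IsSupercompactCard δ) : ℵ₀ < δ := by
  by_contra hle
  push_neg at hle
  obtain ⟨U₀, _, hn₀, hf₀⟩ := h ℵ₀ hle
  have hω : (ℵ₀ : Cardinal).ord = Ordinal.omega0 := Cardinal.ord_aleph0
  have h0 : {x : ↥(SmallSet δ ℵ₀) | (0:Ordinal) ∈ (x : Set Ordinal)} ∈ U₀ :=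
    hf₀ 0 (by rw [hω]; exact Ordinal.omega0_pos)
  have hfin : ∀ x : ↥(SmallSet δ ℵ₀), (x : Set Ordinal).Finite := by
    intro x
    have := x.2.2
    have hlt : #(x : Set Ordinal) < ℵ₀ := lt_of_lt_of_le this (by
      rw [← Cardinal.lift_aleph0.{1,0}]
      exact Cardinal.lift_le.mpr hle)
    exact Cardinal.lt_aleph0_iff_set_finite.mp hlt
  set f : ↥(SmallSet δ ℵ₀) → Ordinal := fun x => sSup (x : Set Ordinal) with hfdef
  have hflt : ∀ x, f x < (ℵ₀ : Cardinal).ord := by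
    intro x
    rcases Set.eq_empty_or_nonempty (x : Set Ordinal) with he | hne
    · simp only [f, he, csSup_empty, Ordinal.bot_eq_zero]
      rw [hω]; exact Ordinal.omega0_pos
    · exact x.2.1 (hne.csSup_mem (hfin x))
  have hmem : {x : ↥(SmallSet δ ℵ₀) | f x ∈ (x : Set Ordinal)} ∈ U₀ :=
    Filter.mem_of_superset h0 (fun x hx => Set.Nonempty.csSup_mem ⟨0, hx⟩ (hfin x))
  obtain ⟨γ, hγ⟩ := hn₀ f hflt hmem
  obtain ⟨x₀, hx₀γ, hx₀0⟩ := Ultrafilter.nonempty_of_mem (Filter.inter_mem hγ h0)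
  have hγω : γ < Ordinal.omega0 := by
    rw [← hω]
    have : f x₀ < (ℵ₀:Cardinal).ord := hflt x₀
    rwa [hx₀γ] at this
  have h1 : {x : ↥(SmallSet δ ℵ₀) | γ + 1 ∈ (x : Set Ordinal)} ∈ U₀ := by
    refine hf₀ (γ + 1) ?_
    rw [hω, ← Order.succ_eq_add_one]
    exact Ordinal.isSuccLimit_omega0.succ_lt hγω
  obtain ⟨x₁, hx₁γ, hx₁1⟩ := Ultrafilter.nonempty_of_mem (Filter.inter_mem hγ h1)
  have : γ + 1 ≤ f x₁ := le_csSup (Set.Finite.bddAbove (hfin x₁)) hx₁1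
  rw [hx₁γ] at this
  exact absurd this (by rw [← Order.succ_eq_add_one]; exact (Order.lt_succ γ).not_ge)
lemma exists_code (κ : Cardinal.{0}) :
    ∃ code : Set Ordinal.{0} → Ordinal.{0},
      (∀ S, S ⊆ Set.Iio κ.ord → code S < ((2^κ : Cardinal)).ord) ∧
      (∀ S T, S ⊆ Set.Iio κ.ord → T ⊆ Set.Iio κ.ord → code S = code T → S = T) := by
  classical
  have e1 : ↥(Set.powerset (Set.Iio κ.ord)) ≃ Set ↥(Set.Iio κ.ord) :=
    Equiv.Set.powerset _
  have h1 : #↥(Set.powerset (Set.Iio κ.ord)) ≤ #↥(Set.Iio ((2^κ : Cardinal)).ord) := by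
    rw [Cardinal.mk_congr e1, Cardinal.mk_set, Ordinal.mk_Iio_ordinal,
      Ordinal.mk_Iio_ordinal, Cardinal.card_ord, Cardinal.card_ord,
      Cardinal.lift_power, Cardinal.lift_two]
  obtain ⟨f⟩ := (Cardinal.le_def _ _).mp h1
  refine ⟨fun S => if h : S ⊆ Set.Iio κ.ord then ((f ⟨S, h⟩ : ↥(Set.Iio ((2^κ : Cardinal)).ord)) : Ordinal) else 0,
    ?_, ?_⟩
  · intro S hS
    simp only []; rw [dif_pos hS]
    exact (f ⟨S, hS⟩).2
  · intro S T hS hT h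
    simp only [] at h; rw [dif_pos hS, dif_pos hT] at h
    have := f.injective (Subtype.coe_injective h)
    exact congrArg Subtype.val this
lemma pressP {κ lam : Cardinal.{0}} {U : Ultrafilter ↥(SmallSet κ lam)}
    (hlam : (0:Ordinal) < lam.ord)
    (hnorm : NormalUF κ lam U) {B : Set ↥(SmallSet κ lam)} (hB : B ∈ U)
    (P : ↥(SmallSet κ lam) → Ordinal → Prop)
    (h : ∀ x ∈ B, ∃ γ, γ ∈ (x : Set Ordinal) ∧ P x γ) :
    ∃ γ₀, {x | x ∈ B ∧ γ₀ ∈ (x : Set Ordinal) ∧ P x γ₀} ∈ U := by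
  classical
  choose F h1 h2 using h
  set f : ↥(SmallSet κ lam) → Ordinal := fun x => if hx : x ∈ B then F x hx else 0 with hfdef
  obtain ⟨γ₀, hγ₀⟩ := press hlam hnorm hB f (fun x hx => by
    simp only [f, dif_pos hx]; exact h1 x hx)
  refine ⟨γ₀, Filter.mem_of_superset hγ₀ ?_⟩
  rintro x ⟨hxB, hfx⟩
  simp only [f, dif_pos hxB] at hfx
  exact ⟨hxB, hfx ▸ h1 x hxB, hfx ▸ h2 x hxB⟩

lemma setConst {κ lam : Cardinal.{0}} {U : Ultrafilter ↥(SmallSet κ lam)}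
    (hlam : (0:Ordinal) < lam.ord)
    (hnorm : NormalUF κ lam U) {B : Set ↥(SmallSet κ lam)} (hB : B ∈ U)
    (T : ↥(SmallSet κ lam) → Set Ordinal)
    (hT : ∀ x ∈ B, T x ⊆ (x : Set Ordinal)) :
    ∃ s : Set Ordinal.{0}, {x | x ∈ B ∧ T x = s ∩ (x : Set Ordinal)} ∈ U := by
  classical
  set s : Set Ordinal.{0} := {γ | {x | x ∈ B ∧ γ ∈ T x} ∈ U} with hsdef
  refine ⟨s, ?_⟩
  by_contra hcon
  rw [← Ultrafilter.compl_mem_iff_notMem] at hcon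
  have hM : {x | x ∈ B ∧ T x ≠ s ∩ (x : Set Ordinal)} ∈ U := by
    refine Filter.mem_of_superset (Filter.inter_mem hcon hB) ?_
    rintro x ⟨hx1, hx2⟩
    refine ⟨hx2, fun he => hx1 ⟨hx2, he⟩⟩
  obtain ⟨γ₀, hN⟩ := pressP hlam hnorm hM
      (fun x γ => ¬(γ ∈ T x ↔ γ ∈ s ∩ (x : Set Ordinal)))
      (by
        rintro x ⟨hxB, hne⟩
        have : ∃ γ, ¬(γ ∈ T x ↔ γ ∈ s ∩ (x : Set Ordinal)) := by
          by_contra hc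
          push_neg at hc
          exact hne (Set.ext fun γ => not_not.mp (fun hh => hh (hc γ)))
        obtain ⟨γ, hγ⟩ := this
        refine ⟨γ, ?_, hγ⟩
        rcases Classical.em (γ ∈ T x) with h | h
        · exact hT x hxB h
        · rcases Classical.em (γ ∈ s ∩ (x : Set Ordinal)) with h' | h'
          · exact h'.2
          · exact absurd (iff_of_false h h') hγ)
  by_cases hc : {x | x ∈ B ∧ γ₀ ∈ T x} ∈ U
  · have hγs : γ₀ ∈ s := hc
    obtain ⟨x, hx1, hx2⟩ := Ultrafilter.nonempty_of_mem (Filter.inter_mem hN hc)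
    exact hx1.2.2 (iff_of_true hx2.2 ⟨hγs, hx1.2.1⟩)
  · have hγs : γ₀ ∉ s := hc
    rw [← Ultrafilter.compl_mem_iff_notMem] at hc
    obtain ⟨x, hx1, hx2⟩ := Ultrafilter.nonempty_of_mem (Filter.inter_mem hN hc)
    have hnT : γ₀ ∉ T x := fun hh => hx2 ⟨hx1.1.1, hh⟩
    exact hx1.2.2 (iff_of_false hnT (fun hh => hγs hh.1))

/-- If κ is measurable, a limit of supercompact cardinals, and 2^κ-supercompact,
then there is a measurable limit of supercompact cardinals below κ. -/
theorem not_least_measurable_limit_of_supercompacts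
    (κ : Cardinal.{0}) (hmeas : IsMeasurableCard κ)
    (hub : ∀ α < κ, ∃ δ : Cardinal.{0}, α < δ ∧ δ < κ ∧ IsSupercompactCard δ)
    (hsc : IsSupercompactTo κ (2 ^ κ)) :
    ∃ δ : Cardinal.{0}, δ < κ ∧ IsMeasurableCard δ ∧
      ∀ α < δ, ∃ ρ : Cardinal.{0}, α < ρ ∧ ρ < δ ∧ IsSupercompactCard ρ := by
  classical
  obtain ⟨U, hcomp, hnorm, hfine⟩ := hsc
  have hκ0 : ℵ₀ < κ := hmeas.1
  have hκpos : (0:Cardinal) < κ := aleph0_pos.trans hκ0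
  have hκlam : κ ≤ 2 ^ κ := (Cardinal.cantor κ).le
  have hκord : κ.ord ≤ (2 ^ κ : Cardinal.{0}).ord := Cardinal.ord_le_ord.mpr hκlam
  have hκop : (0:Ordinal) < κ.ord := Cardinal.lt_ord.mpr (by simpa using hκpos)
  have hord0 : (0:Ordinal) < (2 ^ κ : Cardinal.{0}).ord := lt_of_lt_of_le hκop hκord
  obtain ⟨code, code_lt, code_inj⟩ := exists_code κ
  -- the "diagonal" function g
  set g : ↥(SmallSet κ (2 ^ κ)) → Ordinal := fun x => sInf {b | (x:Set Ordinal) ∩ Set.Iio κ.ord ⊆ Set.Iio b} with hgdef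
  have hgmem : ∀ x : ↥(SmallSet κ (2 ^ κ)), (x:Set Ordinal) ∩ Set.Iio κ.ord ⊆ Set.Iio (g x) := by
    intro x
    have h : g x ∈ {b | (x:Set Ordinal) ∩ Set.Iio κ.ord ⊆ Set.Iio b} :=
      csInf_mem ⟨κ.ord, fun a ha => ha.2⟩
    exact h
  -- almost every x ∩ κ is downward closed
  have hDC : {x : ↥(SmallSet κ (2 ^ κ)) | ∀ b ∈ (x:Set Ordinal), b < κ.ord → ∀ γ' < b, γ' ∈ (x:Set Ordinal)} ∈ U := by
    by_contra hcon
    rw [← Ultrafilter.compl_mem_iff_notMem] at hcon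
    obtain ⟨b₀, hN⟩ := pressP hord0 hnorm hcon
      (fun x b => b < κ.ord ∧ ∃ γ', γ' < b ∧ γ' ∉ (x:Set Ordinal))
      (by
        intro x hx
        have hx2 : ¬ (∀ b ∈ (x:Set Ordinal), b < κ.ord → ∀ γ' < b, γ' ∈ (x:Set Ordinal)) := hx
        push_neg at hx2
        obtain ⟨b, hb1, hb2, γ', hγ1, hγ2⟩ := hx2
        exact ⟨b, hb1, hb2, γ', hγ1, hγ2⟩)
    have hb₀κ : b₀ < κ.ord := by
      obtain ⟨x, hx⟩ := Ultrafilter.nonempty_of_mem hN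
      exact hx.2.2.1
    have hall : {x : ↥(SmallSet κ (2 ^ κ)) | ∀ γ' ∈ Set.Iio b₀, x ∈ {y : ↥(SmallSet κ (2 ^ κ)) | γ' ∈ (y:Set Ordinal)}} ∈ U := by
      refine kcSet hcomp (Set.Iio b₀) ?_ _ ?_
      · rw [Ordinal.mk_Iio_ordinal]
        exact Cardinal.lift_lt.mpr (Cardinal.lt_ord.mp hb₀κ)
      · intro γ' hγ'
        exact hfine γ' (lt_of_lt_of_le (lt_trans hγ' hb₀κ) hκord)
    obtain ⟨x, hx1, hx2⟩ := Ultrafilter.nonempty_of_mem (Filter.inter_mem hN hall)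
    obtain ⟨γ', hγ1, hγ2⟩ := hx1.2.2.2
    exact hγ2 (hx2 γ' hγ1)
  have hGmain : ∀ x : ↥(SmallSet κ (2 ^ κ)),
      (∀ b ∈ (x:Set Ordinal), b < κ.ord → ∀ γ' < b, γ' ∈ (x:Set Ordinal)) →
      ((x:Set Ordinal) ∩ Set.Iio κ.ord = Set.Iio (g x) ∧ g x < κ.ord) := by
    intro x hdc
    have heq : (x:Set Ordinal) ∩ Set.Iio κ.ord = Set.Iio (g x) := by
      refine Set.Subset.antisymm (hgmem x) ?_
      intro γ hγ
      by_contra hγn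
      have hsub : (x:Set Ordinal) ∩ Set.Iio κ.ord ⊆ Set.Iio γ := by
        intro a ha
        rcases lt_trichotomy a γ with h | h | h
        · exact h
        · exact absurd (h ▸ ha) hγn
        · exact absurd ⟨hdc a ha.1 ha.2 γ h, lt_trans h ha.2⟩ hγn
      exact absurd (Set.mem_Iio.mp hγ) (not_lt.mpr (csInf_le (OrderBot.bddBelow _) hsub))
    have hcard : g x < κ.ord := by
      rw [Cardinal.lt_ord]
      have h1 : #(Set.Iio (g x)) ≤ #(x:Set Ordinal) := by
        rw [← heq]; exact Cardinal.mk_le_mk_of_subset Set.inter_subset_left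
      rw [Ordinal.mk_Iio_ordinal] at h1
      exact Cardinal.lift_lt.mp (lt_of_le_of_lt h1 x.2.2)
    exact ⟨heq, hcard⟩
  have hG0 : {x : ↥(SmallSet κ (2 ^ κ)) | (0:Ordinal) ∈ (x:Set Ordinal)} ∈ U := hfine 0 hord0
  set Gset : Set ↥(SmallSet κ (2 ^ κ)) :=
    {x | (x:Set Ordinal) ∩ Set.Iio κ.ord = Set.Iio (g x) ∧ g x < κ.ord ∧ 0 < g x} with hGsetdef
  have hGset : Gset ∈ U := by
    refine Filter.mem_of_superset (Filter.inter_mem hDC hG0) ?_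
    rintro x ⟨hx1, hx2⟩
    obtain ⟨heq, hlt⟩ := hGmain x hx1
    exact ⟨heq, hlt, (heq ▸ (⟨hx2, hκop⟩ : (0:Ordinal) ∈ (x:Set Ordinal) ∩ Set.Iio κ.ord) : (0:Ordinal) ∈ Set.Iio (g x))⟩
  -- the projected measure on κ
  set Dmem : Set Ordinal.{0} → Prop := fun a => {x | g x ∈ a} ∈ U with hDdef
  have hDor : ∀ a, a ⊆ Set.Iio κ.ord → Dmem a ∨ Dmem (Set.Iio κ.ord \ a) := by
    intro a ha
    by_cases h : Dmem a
    · exact Or.inl h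
    · right
      have hcc : {x : ↥(SmallSet κ (2 ^ κ)) | g x ∈ a}ᶜ ∈ U := by
        rw [Ultrafilter.compl_mem_iff_notMem]; exact h
      refine Filter.mem_of_superset (Filter.inter_mem hcc hGset) ?_
      rintro x ⟨hx1, hx2⟩
      exact ⟨hx2.2.1, hx1⟩
  have hDne : ∀ a, Dmem a → a.Nonempty := by
    intro a h
    obtain ⟨x, hx⟩ := Ultrafilter.nonempty_of_mem h
    exact ⟨g x, hx⟩
  have hDint : ∀ (s : Set Ordinal.{0}) (A : Ordinal → Set Ordinal.{0}), #s < Cardinal.lift.{1} κ →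
      (∀ γ ∈ s, Dmem (A γ)) → Dmem (Set.Iio κ.ord ∩ ⋂ γ ∈ s, A γ) := by
    intro s A hs hA
    have h1 : {x : ↥(SmallSet κ (2 ^ κ)) | ∀ γ ∈ s, x ∈ {y : ↥(SmallSet κ (2 ^ κ)) | g y ∈ A γ}} ∈ U :=
      kcSet hcomp s hs _ hA
    refine Filter.mem_of_superset (Filter.inter_mem h1 hGset) ?_
    rintro x ⟨hx1, hx2⟩
    refine ⟨hx2.2.1, ?_⟩
    simp only [Set.mem_iInter]
    exact fun γ hγ => hx1 γ hγ
  -- almost everywhere, g x is a limit of supercompact cardinals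
  set Glim : Set ↥(SmallSet κ (2 ^ κ)) :=
    {x | ∀ γ < g x, ∃ ρ : Cardinal.{0}, IsSupercompactCard ρ ∧ γ < ρ.ord ∧ ρ.ord < g x} with hGlimdef
  have hGlim : Glim ∈ U := by
    by_contra hcon
    rw [← Ultrafilter.compl_mem_iff_notMem] at hcon
    have hB : Glimᶜ ∩ Gset ∈ U := Filter.inter_mem hcon hGset
    obtain ⟨γ₀, hN⟩ := pressP hord0 hnorm hB
      (fun x γ => γ < g x ∧ ∀ ρ : Cardinal.{0}, ¬(IsSupercompactCard ρ ∧ γ < ρ.ord ∧ ρ.ord < g x))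
      (by
        rintro x ⟨hx1, hx2⟩
        have hx1' : ¬ (∀ γ < g x, ∃ ρ : Cardinal.{0}, IsSupercompactCard ρ ∧ γ < ρ.ord ∧ ρ.ord < g x) := hx1
        push_neg at hx1'
        obtain ⟨γ, hγ1, hγ2⟩ := hx1'
        have hγx : γ ∈ (x:Set Ordinal) := ((hx2.1.symm ▸ hγ1) : γ ∈ (x:Set Ordinal) ∩ Set.Iio κ.ord).1
        exact ⟨γ, hγx, hγ1, fun ρ hc => absurd (hγ2 ρ hc.1 hc.2.1) (not_le.mpr hc.2.2)⟩)
    have hγ₀κ : γ₀ < κ.ord := by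
      obtain ⟨x, hx⟩ := Ultrafilter.nonempty_of_mem hN
      exact lt_trans hx.2.2.1 hx.1.2.2.1
    obtain ⟨ρ, hρ1, hρ2, hρ3⟩ := hub γ₀.card (Cardinal.lt_ord.mp hγ₀κ)
    have hρord : ρ.ord < κ.ord := Cardinal.ord_lt_ord.mpr hρ2
    have hfρ := hfine ρ.ord (lt_of_lt_of_le hρord hκord)
    obtain ⟨x, hx1, hx2⟩ := Ultrafilter.nonempty_of_mem (Filter.inter_mem hN hfρ)
    have hgx : ρ.ord ∈ Set.Iio (g x) :=
      (hx1.1.2.1 ▸ (⟨hx2, hρord⟩ : ρ.ord ∈ (x:Set Ordinal) ∩ Set.Iio κ.ord) : ρ.ord ∈ Set.Iio (g x))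
    exact hx1.2.2.2 ρ ⟨hρ3, Cardinal.lt_ord.mpr hρ1, hgx⟩
  -- properness
  set Gprop : Set ↥(SmallSet κ (2 ^ κ)) :=
    {x | ∀ a, a ⊆ Set.Iio κ.ord → Dmem a → code a ∈ (x:Set Ordinal) → (a ∩ Set.Iio (g x)).Nonempty} with hGpropdef
  have hGprop : Gprop ∈ U := by
    by_contra hcon
    rw [← Ultrafilter.compl_mem_iff_notMem] at hcon
    obtain ⟨γ₀, hN⟩ := pressP hord0 hnorm (Filter.inter_mem hcon hGset)
      (fun x γ => ∃ a, a ⊆ Set.Iio κ.ord ∧ Dmem a ∧ code a = γ ∧ a ∩ Set.Iio (g x) = ∅)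
      (by
        rintro x ⟨hx1, hx2⟩
        have hx1' : ¬ (∀ a, a ⊆ Set.Iio κ.ord → Dmem a → code a ∈ (x:Set Ordinal) →
            (a ∩ Set.Iio (g x)).Nonempty) := hx1
        push_neg at hx1'
        obtain ⟨a, ha1, ha2, ha3, ha4⟩ := hx1'
        exact ⟨code a, ha3, a, ha1, ha2, rfl, ha4⟩)
    obtain ⟨x₀, hx₀⟩ := Ultrafilter.nonempty_of_mem hN
    obtain ⟨a₀, ha1, ha2, ha3, ha4⟩ := hx₀.2.2
    obtain ⟨α₀, hα₀⟩ := hDne a₀ ha2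
    have hα₀κ : α₀ < κ.ord := ha1 hα₀
    have hfα := hfine α₀ (lt_of_lt_of_le hα₀κ hκord)
    obtain ⟨x, hx1, hx2⟩ := Ultrafilter.nonempty_of_mem (Filter.inter_mem hN hfα)
    obtain ⟨a, hb1, hb2, hb3, hb4⟩ := hx1.2.2
    have hae : a = a₀ := code_inj _ _ hb1 ha1 (hb3.trans ha3.symm)
    have hmem : α₀ ∈ a ∩ Set.Iio (g x) :=
      ⟨hae.symm ▸ hα₀, (hx1.1.2.1 ▸ (⟨hx2, hα₀κ⟩ : α₀ ∈ (x:Set Ordinal) ∩ Set.Iio κ.ord) : α₀ ∈ Set.Iio (g x))⟩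
    rw [hb4] at hmem
    exact hmem
  -- nonprincipality
  set Gnp : Set ↥(SmallSet κ (2 ^ κ)) :=
    {x | ∀ s' < g x, ∀ a, a ⊆ Set.Iio κ.ord → Dmem a → code a ∈ (x:Set Ordinal) →
      ¬(a ∩ Set.Iio (g x) ⊆ {s'})} with hGnpdef
  have hGnp : Gnp ∈ U := by
    by_contra hcon
    rw [← Ultrafilter.compl_mem_iff_notMem] at hcon
    obtain ⟨s₀, hN1⟩ := pressP hord0 hnorm (Filter.inter_mem hcon hGset)
      (fun x s' => s' < g x ∧ ∃ a, a ⊆ Set.Iio κ.ord ∧ Dmem a ∧ code a ∈ (x:Set Ordinal) ∧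
        a ∩ Set.Iio (g x) ⊆ {s'})
      (by
        rintro x ⟨hx1, hx2⟩
        have hx1' : ¬ (∀ s' < g x, ∀ a, a ⊆ Set.Iio κ.ord → Dmem a → code a ∈ (x:Set Ordinal) →
            ¬(a ∩ Set.Iio (g x) ⊆ {s'})) := hx1
        push_neg at hx1'
        obtain ⟨s', hs1, a, ha1, ha2, ha3, ha4⟩ := hx1'
        have hs'x : s' ∈ (x:Set Ordinal) :=
          ((hx2.1.symm ▸ (Set.mem_Iio.mpr hs1 : s' ∈ Set.Iio (g x))) : s' ∈ (x:Set Ordinal) ∩ Set.Iio κ.ord).1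
        exact ⟨s', hs'x, hs1, a, ha1, ha2, ha3, ha4⟩)
    obtain ⟨γ₀, hN2⟩ := pressP hord0 hnorm hN1
      (fun x γ => ∃ a, a ⊆ Set.Iio κ.ord ∧ Dmem a ∧ code a = γ ∧ a ∩ Set.Iio (g x) ⊆ {s₀})
      (by
        rintro x ⟨hxB, hx2, hs1, a, ha1, ha2, ha3, ha4⟩
        exact ⟨code a, ha3, a, ha1, ha2, rfl, ha4⟩)
    obtain ⟨x₀, hx₀⟩ := Ultrafilter.nonempty_of_mem hN2
    obtain ⟨a₀, ha1, ha2, ha3, ha4⟩ := hx₀.2.2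
    have hs₀κ : s₀ < κ.ord := lt_trans hx₀.1.2.2.1 hx₀.1.1.2.2.1
    have hgne : {x : ↥(SmallSet κ (2 ^ κ)) | g x = s₀} ∉ U := by
      intro hmem
      have hfs := hfine s₀ (lt_of_lt_of_le hs₀κ hκord)
      obtain ⟨x, hx1, hx2⟩ := Ultrafilter.nonempty_of_mem
        (Filter.inter_mem (Filter.inter_mem hmem hfs) hGset)
      have hlt : s₀ ∈ Set.Iio (g x) :=
        (hx2.1 ▸ (⟨hx1.2, hs₀κ⟩ : s₀ ∈ (x:Set Ordinal) ∩ Set.Iio κ.ord) : s₀ ∈ Set.Iio (g x))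
      have hss : s₀ < g x := Set.mem_Iio.mp hlt
      rw [hx1.1] at hss
      exact lt_irrefl _ hss
    have hDa' : Dmem (a₀ \ {s₀}) := by
      have h2 : {x : ↥(SmallSet κ (2 ^ κ)) | g x = s₀}ᶜ ∈ U := by
        rw [Ultrafilter.compl_mem_iff_notMem]; exact hgne
      refine Filter.mem_of_superset (Filter.inter_mem ha2 h2) ?_
      rintro x ⟨k1, k2⟩
      exact ⟨k1, fun hk => k2 hk⟩
    obtain ⟨α₁, hα₁⟩ := hDne _ hDa'
    have hα₁κ : α₁ < κ.ord := ha1 hα₁.1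
    have hfα := hfine α₁ (lt_of_lt_of_le hα₁κ hκord)
    obtain ⟨x, hx1, hx2⟩ := Ultrafilter.nonempty_of_mem (Filter.inter_mem hN2 hfα)
    obtain ⟨a, hb1, hb2, hb3, hb4⟩ := hx1.2.2
    have hae : a = a₀ := code_inj _ _ hb1 ha1 (hb3.trans ha3.symm)
    have hmem : α₁ ∈ a ∩ Set.Iio (g x) :=
      ⟨hae.symm ▸ hα₁.1, (hx1.1.1.2.1 ▸ (⟨hx2, hα₁κ⟩ : α₁ ∈ (x:Set Ordinal) ∩ Set.Iio κ.ord) : α₁ ∈ Set.Iio (g x))⟩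
    exact hα₁.2 (hb4 hmem)
  -- decisiveness
  set Gdec : Set ↥(SmallSet κ (2 ^ κ)) :=
    {x | ∀ S, S ⊆ Set.Iio (g x) →
      (∃ a, a ⊆ Set.Iio κ.ord ∧ Dmem a ∧ code a ∈ (x:Set Ordinal) ∧ a ∩ Set.Iio (g x) ⊆ S) ∨
      (∃ a, a ⊆ Set.Iio κ.ord ∧ Dmem a ∧ code a ∈ (x:Set Ordinal) ∧
        a ∩ Set.Iio (g x) ⊆ Set.Iio (g x) \ S)} with hGdecdef
  have hGdec : Gdec ∈ U := by
    by_contra hcon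
    rw [← Ultrafilter.compl_mem_iff_notMem] at hcon
    have hB : Gdecᶜ ∩ Gset ∈ U := Filter.inter_mem hcon hGset
    have hch : ∀ x ∈ Gdecᶜ ∩ Gset, ∃ S, S ⊆ Set.Iio (g x) ∧
        (∀ a, a ⊆ Set.Iio κ.ord → Dmem a → code a ∈ (x:Set Ordinal) → ¬(a ∩ Set.Iio (g x) ⊆ S)) ∧
        (∀ a, a ⊆ Set.Iio κ.ord → Dmem a → code a ∈ (x:Set Ordinal) →
          ¬(a ∩ Set.Iio (g x) ⊆ Set.Iio (g x) \ S)) := by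
      rintro x ⟨hx1, hx2⟩
      have hx1' : ¬ (∀ S, S ⊆ Set.Iio (g x) →
        (∃ a, a ⊆ Set.Iio κ.ord ∧ Dmem a ∧ code a ∈ (x:Set Ordinal) ∧ a ∩ Set.Iio (g x) ⊆ S) ∨
        (∃ a, a ⊆ Set.Iio κ.ord ∧ Dmem a ∧ code a ∈ (x:Set Ordinal) ∧
          a ∩ Set.Iio (g x) ⊆ Set.Iio (g x) \ S)) := hx1
      push_neg at hx1'
      obtain ⟨S, h1, h2⟩ := hx1'
      exact ⟨S, h1, fun a k1 k2 k3 => h2.1 a k1 k2 k3, fun a k1 k2 k3 => h2.2 a k1 k2 k3⟩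
    choose Tf hT1 hT2 hT3 using hch
    classical
    set T : ↥(SmallSet κ (2 ^ κ)) → Set Ordinal.{0} :=
      fun x => if hx : x ∈ Gdecᶜ ∩ Gset then Tf x hx else ∅ with hTdef
    obtain ⟨s0, hNs⟩ := setConst hord0 hnorm hB T (by
      intro x hx
      simp only [T, dif_pos hx]
      intro γ hγ
      exact ((hx.2.1.symm ▸ (hT1 x hx hγ : γ ∈ Set.Iio (g x))) : γ ∈ (x:Set Ordinal) ∩ Set.Iio κ.ord).1)
    have key : ∀ x, ∀ hx : x ∈ Gdecᶜ ∩ Gset, T x = s0 ∩ (x:Set Ordinal) →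
        Tf x hx = (s0 ∩ Set.Iio κ.ord) ∩ Set.Iio (g x) := by
      intro x hx heq
      have hTx : T x = Tf x hx := by simp only [T, dif_pos hx]
      rw [hTx] at heq
      ext γ
      constructor
      · intro hγ
        have hγg : γ ∈ Set.Iio (g x) := hT1 x hx hγ
        have hγκ : γ < κ.ord := lt_trans (Set.mem_Iio.mp hγg) hx.2.2.1
        have hγs : γ ∈ s0 ∩ (x:Set Ordinal) := heq ▸ hγ
        exact ⟨⟨hγs.1, hγκ⟩, hγg⟩
      · rintro ⟨⟨hγs, hγκ⟩, hγg⟩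
        have hγx : γ ∈ (x:Set Ordinal) :=
          ((hx.2.1.symm ▸ hγg) : γ ∈ (x:Set Ordinal) ∩ Set.Iio κ.ord).1
        exact heq.symm ▸ (⟨hγs, hγx⟩ : γ ∈ s0 ∩ (x:Set Ordinal))
    rcases hDor (s0 ∩ Set.Iio κ.ord) Set.inter_subset_right with hda | hda
    · have hfc := hfine (code (s0 ∩ Set.Iio κ.ord)) (code_lt _ Set.inter_subset_right)
      obtain ⟨x, hx1, hx2⟩ := Ultrafilter.nonempty_of_mem (Filter.inter_mem hNs hfc)
      refine hT2 x hx1.1 _ Set.inter_subset_right hda hx2 ?_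
      rw [key x hx1.1 hx1.2]
    · have hfc := hfine (code (Set.Iio κ.ord \ (s0 ∩ Set.Iio κ.ord)))
        (code_lt _ Set.diff_subset)
      obtain ⟨x, hx1, hx2⟩ := Ultrafilter.nonempty_of_mem (Filter.inter_mem hNs hfc)
      refine hT3 x hx1.1 _ Set.diff_subset hda hx2 ?_
      rintro γ ⟨⟨hγκ, hγna⟩, hγg⟩
      refine ⟨hγg, fun hγT => hγna ?_⟩
      rw [key x hx1.1 hx1.2] at hγT
      exact hγT.1
  -- completeness
  set Gcomp : Set ↥(SmallSet κ (2 ^ κ)) :=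
    {x | ∀ t : Set Ordinal.{0}, t ⊆ (x:Set Ordinal) → #t < Cardinal.lift.{1} (g x).card →
      (∀ γ ∈ t, ∃ a, a ⊆ Set.Iio κ.ord ∧ Dmem a ∧ code a = γ) →
      ∃ d, d ⊆ Set.Iio κ.ord ∧ Dmem d ∧ code d ∈ (x:Set Ordinal) ∧
        ∀ γ ∈ t, ∀ a, a ⊆ Set.Iio κ.ord → code a = γ → d ⊆ a} with hGcompdef
  have hGcomp : Gcomp ∈ U := by
    by_contra hcon
    rw [← Ultrafilter.compl_mem_iff_notMem] at hcon
    have hB : Gcompᶜ ∩ Gset ∈ U := Filter.inter_mem hcon hGset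
    have hch : ∀ x ∈ Gcompᶜ ∩ Gset, ∃ t : Set Ordinal.{0}, t ⊆ (x:Set Ordinal) ∧
        #t < Cardinal.lift.{1} (g x).card ∧
        (∀ γ ∈ t, ∃ a, a ⊆ Set.Iio κ.ord ∧ Dmem a ∧ code a = γ) ∧
        ¬(∃ d, d ⊆ Set.Iio κ.ord ∧ Dmem d ∧ code d ∈ (x:Set Ordinal) ∧
          ∀ γ ∈ t, ∀ a, a ⊆ Set.Iio κ.ord → code a = γ → d ⊆ a) := by
      rintro x ⟨hx1, hx2⟩
      have hx1' : ¬ (∀ t : Set Ordinal.{0}, t ⊆ (x:Set Ordinal) →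
          #t < Cardinal.lift.{1} (g x).card →
          (∀ γ ∈ t, ∃ a, a ⊆ Set.Iio κ.ord ∧ Dmem a ∧ code a = γ) →
          ∃ d, d ⊆ Set.Iio κ.ord ∧ Dmem d ∧ code d ∈ (x:Set Ordinal) ∧
            ∀ γ ∈ t, ∀ a, a ⊆ Set.Iio κ.ord → code a = γ → d ⊆ a) := hx1
      push_neg at hx1'
      obtain ⟨t, h1, h2, h3, h4⟩ := hx1'
      refine ⟨t, h1, h2, h3, ?_⟩
      rintro ⟨d, k1, k2, k3, k4⟩
      obtain ⟨γ, hγ, a, ha, hca, hna⟩ := h4 d k1 k2 k3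
      exact hna (k4 γ hγ a ha hca)
    choose Tf h1 h2 h3 h4 using hch
    set T : ↥(SmallSet κ (2 ^ κ)) → Set Ordinal.{0} :=
      fun x => if hx : x ∈ Gcompᶜ ∩ Gset then Tf x hx else ∅ with hTdef
    obtain ⟨s1, hNs⟩ := setConst hord0 hnorm hB T (by
      intro x hx
      simp only [T, dif_pos hx]
      exact h1 x hx)
    set sstar : Set Ordinal.{0} := s1 ∩ Set.Iio ((2 ^ κ : Cardinal.{0}).ord) with hsstardef
    have hTs : ∀ x, x ∈ Gcompᶜ ∩ Gset → T x = s1 ∩ (x:Set Ordinal) →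
        T x = sstar ∩ (x:Set Ordinal) := by
      intro x hx heq
      rw [heq]
      ext γ
      constructor
      · rintro ⟨k1, k2⟩
        exact ⟨⟨k1, x.2.1 k2⟩, k2⟩
      · rintro ⟨⟨k1, _⟩, k2⟩
        exact ⟨k1, k2⟩
    have hcode : ∀ γ ∈ sstar, ∃ a, a ⊆ Set.Iio κ.ord ∧ Dmem a ∧ code a = γ := by
      intro γ hγ
      have hfγ := hfine γ hγ.2
      obtain ⟨x, hx1, hx2⟩ := Ultrafilter.nonempty_of_mem (Filter.inter_mem hNs hfγ)
      have hγT : γ ∈ T x := (hTs x hx1.1 hx1.2).symm ▸ (⟨hγ, hx2⟩ : γ ∈ sstar ∩ (x:Set Ordinal))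
      have hγTf : γ ∈ Tf x hx1.1 := by
        have : T x = Tf x hx1.1 := by simp only [T, dif_pos hx1.1]
        rwa [this] at hγT
      exact h3 x hx1.1 γ hγTf
    have hssmall : #↥sstar < Cardinal.lift.{1} κ := by
      by_contra hbig
      push_neg at hbig
      have hemb : Nonempty (↥(Set.Iio κ.ord) ↪ ↥sstar) := by
        refine (Cardinal.le_def _ _).mp ?_
        rw [Ordinal.mk_Iio_ordinal, Cardinal.card_ord]
        exact hbig
      obtain ⟨e⟩ := hemb
      set E : Ordinal.{0} → Ordinal.{0} :=
        fun ξ => if h : ξ < κ.ord then ((e ⟨ξ, h⟩ : ↥sstar) : Ordinal) else 0 with hEdef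
      have hEs : ∀ ξ (h : ξ < κ.ord), E ξ ∈ sstar := by
        intro ξ h
        simp only [E, dif_pos h]
        exact (e ⟨ξ, h⟩).2
      have hEinj : ∀ ξ η, ξ < κ.ord → η < κ.ord → E ξ = E η → ξ = η := by
        intro ξ η k1 k2 he
        simp only [E, dif_pos k1, dif_pos k2] at he
        have := e.injective (Subtype.coe_injective he)
        exact congrArg Subtype.val this
      have hmiss : ∀ x : ↥(SmallSet κ (2 ^ κ)), ∃ ξ, ξ < κ.ord ∧ E ξ ∉ (x:Set Ordinal) := by
        intro x
        by_contra hc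
        push_neg at hc
        have hinj : Function.Injective
            (fun p : ↥(Set.Iio κ.ord) => (⟨E p, hc p p.2⟩ : ↥(x:Set Ordinal))) := by
          intro p q hpq
          have hEpq : E p = E q := congrArg Subtype.val hpq
          exact Subtype.ext (hEinj _ _ p.2 q.2 hEpq)
        have hle := Cardinal.mk_le_of_injective hinj
        rw [Ordinal.mk_Iio_ordinal, Cardinal.card_ord] at hle
        exact absurd (lt_of_le_of_lt hle x.2.2) (lt_irrefl _)
      set xif : ↥(SmallSet κ (2 ^ κ)) → Ordinal :=
        fun x => sInf {ξ | ξ < κ.ord ∧ E ξ ∉ (x:Set Ordinal)} with hxifdef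
      have hximem : ∀ x : ↥(SmallSet κ (2 ^ κ)), xif x < κ.ord ∧ E (xif x) ∉ (x:Set Ordinal) := by
        intro x
        have hmem : xif x ∈ {ξ | ξ < κ.ord ∧ E ξ ∉ (x:Set Ordinal)} := csInf_mem (hmiss x)
        exact hmem
      have hxilow : ∀ (x : ↥(SmallSet κ (2 ^ κ))) (η : Ordinal), η < xif x → η < κ.ord →
          E η ∈ (x:Set Ordinal) := by
        intro x η hη hηκ
        by_contra hc
        exact absurd hη (not_lt.mpr (csInf_le (OrderBot.bddBelow _) ⟨hηκ, hc⟩))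
      have hbound : ∀ x, ∀ hx : x ∈ Gcompᶜ ∩ Gset, T x = s1 ∩ (x:Set Ordinal) →
          (xif x).card < (g x).card := by
        intro x hx heq
        have hinj : Function.Injective
            (fun p : ↥(Set.Iio (xif x)) =>
              (⟨E p, by
                have k1 : (p:Ordinal) < κ.ord := lt_trans p.2 (hximem x).1
                have k2 : E p ∈ (x:Set Ordinal) := hxilow x p p.2 k1
                have k3 : E p ∈ sstar := hEs p k1
                exact (hTs x hx heq).symm ▸ (⟨k3, k2⟩ : E (p:Ordinal) ∈ sstar ∩ (x:Set Ordinal))⟩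
                : ↥(T x))) := by
          intro p q hpq
          have hEpq : E p = E q := congrArg Subtype.val hpq
          exact Subtype.ext (hEinj _ _ (lt_trans p.2 (hximem x).1) (lt_trans q.2 (hximem x).1) hEpq)
        have hle := Cardinal.mk_le_of_injective hinj
        rw [Ordinal.mk_Iio_ordinal] at hle
        have hTfx : T x = Tf x hx := by simp only [T, dif_pos hx]
        rw [hTfx] at hle
        have := lt_of_le_of_lt hle (h2 x hx)
        exact Cardinal.lift_lt.mp this
      obtain ⟨c₀, hNc⟩ := press hord0 hnorm hNs (fun x => ((xif x).card).ord) (by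
        intro x hx
        have h5 : ((xif x).card).ord < g x :=
          lt_of_lt_of_le (Cardinal.ord_lt_ord.mpr (hbound x hx.1 hx.2)) (Cardinal.ord_card_le (g x))
        exact ((hx.1.2.1.symm ▸ (Set.mem_Iio.mpr h5 : ((xif x).card).ord ∈ Set.Iio (g x)))
          : ((xif x).card).ord ∈ (x:Set Ordinal) ∩ Set.Iio κ.ord).1)
      have hμκ : c₀.card < κ := by
        obtain ⟨x, hx1, hx2⟩ := Ultrafilter.nonempty_of_mem hNc
        rw [← hx2, Cardinal.card_ord]
        exact Cardinal.lt_ord.mp (hximem x).1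
      obtain ⟨δ', hδ1, hδ2, _⟩ := hub c₀.card hμκ
      have hsuccκ : Order.succ c₀.card < κ := lt_of_le_of_lt (Order.succ_le_of_lt hδ1) hδ2
      have hall : {x : ↥(SmallSet κ (2 ^ κ)) | ∀ ξ ∈ Set.Iio (Order.succ c₀.card).ord,
          x ∈ {y : ↥(SmallSet κ (2 ^ κ)) | ∀ h : ξ < κ.ord, E ξ ∈ (y:Set Ordinal)}} ∈ U := by
        refine kcSet hcomp _ ?_ _ ?_
        · rw [Ordinal.mk_Iio_ordinal, Cardinal.card_ord]
          exact Cardinal.lift_lt.mpr hsuccκ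
        · intro ξ hξ
          by_cases h : ξ < κ.ord
          · have hmem : E ξ ∈ sstar := hEs ξ h
            refine Filter.mem_of_superset (hfine (E ξ) hmem.2) ?_
            intro y hy h'
            exact hy
          · refine Filter.mem_of_superset Filter.univ_mem ?_
            intro y _ h'
            exact absurd h' h
      obtain ⟨x, hx1, hx2⟩ := Ultrafilter.nonempty_of_mem (Filter.inter_mem hNc hall)
      have hμx : (xif x).card = c₀.card := by
        rw [← hx1.2, Cardinal.card_ord]
      have hξν : xif x < (Order.succ c₀.card).ord := by
        rw [Cardinal.lt_ord, hμx]
        exact Order.lt_succ c₀.card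
      exact (hximem x).2 (hx2 (xif x) hξν (hximem x).1)
    -- build d
    have hA : ∀ γ, ∃ a : Set Ordinal.{0}, γ ∈ sstar →
        a ⊆ Set.Iio κ.ord ∧ Dmem a ∧ code a = γ := by
      intro γ
      by_cases h : γ ∈ sstar
      · obtain ⟨a, k1, k2, k3⟩ := hcode γ h
        exact ⟨a, fun _ => ⟨k1, k2, k3⟩⟩
      · exact ⟨Set.Iio κ.ord, fun hh => absurd hh h⟩
    choose A hAspec using hA
    have hDd : Dmem (Set.Iio κ.ord ∩ ⋂ γ ∈ sstar, A γ) := by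
      refine hDint sstar A hssmall ?_
      intro γ hγ
      exact (hAspec γ hγ).2.1
    have hdsub : (Set.Iio κ.ord ∩ ⋂ γ ∈ sstar, A γ) ⊆ Set.Iio κ.ord := Set.inter_subset_left
    have hfd := hfine (code (Set.Iio κ.ord ∩ ⋂ γ ∈ sstar, A γ)) (code_lt _ hdsub)
    obtain ⟨x, hx1, hx2⟩ := Ultrafilter.nonempty_of_mem (Filter.inter_mem hNs hfd)
    refine h4 x hx1.1 ⟨Set.Iio κ.ord ∩ ⋂ γ ∈ sstar, A γ, hdsub, hDd, hx2, ?_⟩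
    intro γ hγ a ha hcodea
    have hγT : γ ∈ T x := by
      have hTfx : T x = Tf x hx1.1 := by simp only [T, dif_pos hx1.1]
      rw [hTfx]
      exact hγ
    have hγs : γ ∈ sstar := ((hTs x hx1.1 hx1.2) ▸ hγT).1
    have hae : a = A γ := code_inj _ _ ha (hAspec γ hγs).1 (hcodea.trans (hAspec γ hγs).2.2.symm)
    rw [hae]
    intro β hβ
    exact Set.mem_iInter₂.mp hβ.2 γ hγs
  -- choose the witness point
  obtain ⟨xs, hxG, hxL, hxP, hxN, hxD, hxC⟩ := Ultrafilter.nonempty_of_mem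
    (Filter.inter_mem hGset (Filter.inter_mem hGlim (Filter.inter_mem hGprop
      (Filter.inter_mem hGnp (Filter.inter_mem hGdec hGcomp)))))
  set β : Ordinal.{0} := g xs with hβdef
  have hβκ : β < κ.ord := hxG.2.1
  have hβ0 : (0:Ordinal) < β := hxG.2.2
  have hident : (xs:Set Ordinal) ∩ Set.Iio κ.ord = Set.Iio β := hxG.1
  have hβcard : β.card.ord = β := by
    refine le_antisymm (Cardinal.ord_card_le β) ?_
    by_contra hlt
    push_neg at hlt
    obtain ⟨ρ, hρsc, hρ1, hρ2⟩ := hxL β.card.ord hlt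
    have hle1 : ρ ≤ β.card := by
      have := Ordinal.card_le_card hρ2.le
      rwa [Cardinal.card_ord] at this
    have hle2 : ρ.ord ≤ β.card.ord := Cardinal.ord_le_ord.mpr hle1
    exact absurd hρ1 (not_lt.mpr hle2)
  set δ : Cardinal.{0} := β.card with hδdef
  have hδord : δ.ord = β := hβcard
  have hδκ : δ < κ := Cardinal.lt_ord.mp hβκ
  have hℵδ : ℵ₀ < δ := by
    obtain ⟨ρ, hρsc, hρ1, hρ2⟩ := hxL 0 hβ0
    have h6 : ρ ≤ δ := by
      have := Ordinal.card_le_card hρ2.le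
      rwa [Cardinal.card_ord] at this
    exact lt_of_lt_of_le (sc_aleph0_lt hρsc) h6
  -- the ultrafilter witnessing measurability of δ
  set Wsets : Set (Set ↥(Set.Iio β)) :=
    {S | ∃ a, a ⊆ Set.Iio κ.ord ∧ Dmem a ∧ code a ∈ (xs:Set Ordinal) ∧
      ∀ p : ↥(Set.Iio β), (p:Ordinal) ∈ a → p ∈ S} with hWdef
  have hWd : ∀ t : Set Ordinal.{0}, t ⊆ (xs:Set Ordinal) → #t < Cardinal.lift.{1} δ →
      (∀ γ ∈ t, ∃ a, a ⊆ Set.Iio κ.ord ∧ Dmem a ∧ code a = γ) →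
      ∃ d, d ⊆ Set.Iio κ.ord ∧ Dmem d ∧ code d ∈ (xs:Set Ordinal) ∧
        ∀ γ ∈ t, ∀ a, a ⊆ Set.Iio κ.ord → code a = γ → d ⊆ a := hxC
  have hWuniv : Set.univ ∈ Wsets := by
    obtain ⟨d, k1, k2, k3, _⟩ := hWd ∅ (by simp) (by
      rw [Cardinal.mk_emptyCollection]
      have hpos : Cardinal.lift.{1} 0 < Cardinal.lift.{1} δ :=
        Cardinal.lift_lt.mpr (aleph0_pos.trans hℵδ)
      rwa [Cardinal.lift_zero] at hpos)
      (by intro γ hγ; exact absurd hγ (Set.notMem_empty γ))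
    exact ⟨d, k1, k2, k3, fun p _ => Set.mem_univ p⟩
  have hWinter : ∀ S T', S ∈ Wsets → T' ∈ Wsets → S ∩ T' ∈ Wsets := by
    rintro S T' ⟨a, ka1, ka2, ka3, ka4⟩ ⟨b, kb1, kb2, kb3, kb4⟩
    obtain ⟨d, k1, k2, k3, k4⟩ := hWd {code a, code b}
      (by
        intro γ hγ
        simp only [Set.mem_insert_iff, Set.mem_singleton_iff] at hγ
        rcases hγ with rfl | rfl
        · exact ka3
        · exact kb3)
      (by
        have hfin : ({code a, code b} : Set Ordinal.{0}).Finite := Set.toFinite _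
        have hlt2 := Cardinal.lt_aleph0_iff_set_finite.mpr hfin
        refine lt_of_lt_of_le hlt2 ?_
        rw [← Cardinal.lift_aleph0.{1,0}]
        exact Cardinal.lift_le.mpr hℵδ.le)
      (by
        intro γ hγ
        simp only [Set.mem_insert_iff, Set.mem_singleton_iff] at hγ
        rcases hγ with rfl | rfl
        · exact ⟨a, ka1, ka2, rfl⟩
        · exact ⟨b, kb1, kb2, rfl⟩)
    have hda : d ⊆ a := k4 (code a) (Set.mem_insert _ _) a ka1 rfl
    have hdb : d ⊆ b := k4 (code b) (Set.mem_insert_of_mem _ rfl) b kb1 rfl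
    exact ⟨d, k1, k2, k3, fun p hp => ⟨ka4 p (hda hp), kb4 p (hdb hp)⟩⟩
  have hWproper : ∀ S ∈ Wsets, S.Nonempty := by
    rintro S ⟨a, k1, k2, k3, k4⟩
    obtain ⟨γ, hγ⟩ := hxP a k1 k2 k3
    exact ⟨⟨γ, hγ.2⟩, k4 _ hγ.1⟩
  set F : Filter ↥(Set.Iio β) :=
    { sets := Wsets
      univ_sets := hWuniv
      sets_of_superset := by
        rintro S T' ⟨a, k1, k2, k3, k4⟩ hST
        exact ⟨a, k1, k2, k3, fun p hp => hST (k4 p hp)⟩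
      inter_sets := by
        intro S T' hS hT'
        exact hWinter _ _ hS hT' } with hFdef
  have hFmem : ∀ S : Set ↥(Set.Iio β), S ∈ F ↔ S ∈ Wsets := fun S => Iff.rfl
  have hFdec : ∀ s : Set ↥(Set.Iio β), sᶜ ∉ F ↔ s ∈ F := by
    intro s
    constructor
    · intro hns
      have hsub : {γ | ∃ h : γ < β, (⟨γ, h⟩ : ↥(Set.Iio β)) ∈ s} ⊆ Set.Iio β :=
        fun γ hγ => hγ.1
      rcases hxD _ hsub with ⟨a, k1, k2, k3, k4⟩ | ⟨a, k1, k2, k3, k4⟩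
      · refine (hFmem s).mpr ⟨a, k1, k2, k3, ?_⟩
        intro p hp
        obtain ⟨h', hs⟩ := k4 ⟨hp, p.2⟩
        have hpe : (⟨(p:Ordinal), h'⟩ : ↥(Set.Iio β)) = p := Subtype.ext rfl
        rwa [hpe] at hs
      · exfalso
        refine hns ((hFmem sᶜ).mpr ⟨a, k1, k2, k3, ?_⟩)
        intro p hp hps
        have hdiff := k4 ⟨hp, p.2⟩
        refine hdiff.2 ⟨p.2, ?_⟩
        have hpe : (⟨(p:Ordinal), p.2⟩ : ↥(Set.Iio β)) = p := Subtype.ext rfl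
        rwa [hpe]
    · intro hsF hscF
      have h0 := hWinter _ _ ((hFmem s).mp hsF) ((hFmem sᶜ).mp hscF)
      rw [Set.inter_compl_self] at h0
      obtain ⟨p, hp⟩ := hWproper _ h0
      exact hp
  set W : Ultrafilter ↥(Set.Iio β) := Ultrafilter.ofComplNotMemIff F hFdec with hWUdef
  have hWmem : ∀ S : Set ↥(Set.Iio β), S ∈ W ↔ S ∈ Wsets := fun S => Iff.rfl
  have hKC : KComplete δ W := by
    intro ι A hι hA
    have hch : ∀ i, ∃ a, a ⊆ Set.Iio κ.ord ∧ Dmem a ∧ code a ∈ (xs:Set Ordinal) ∧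
        ∀ p : ↥(Set.Iio β), (p:Ordinal) ∈ a → p ∈ A i := fun i => (hWmem _).mp (hA i)
    choose a k1 k2 k3 k4 using hch
    obtain ⟨d, m1, m2, m3, m4⟩ := hWd (Set.range (fun i => code (a i)))
      (by rintro γ ⟨i, rfl⟩; exact k3 i)
      (by
        have h7 : Cardinal.lift.{0} #(Set.range fun i => code (a i)) ≤ Cardinal.lift.{1} #ι :=
          Cardinal.mk_range_le_lift
        rw [Cardinal.lift_uzero] at h7
        exact lt_of_le_of_lt h7 (Cardinal.lift_lt.mpr hι))
      (by rintro γ ⟨i, rfl⟩; exact ⟨a i, k1 i, k2 i, rfl⟩)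
    refine (hWmem _).mpr ⟨d, m1, m2, m3, ?_⟩
    intro p hp
    rw [Set.mem_iInter]
    intro i
    exact k4 i p (m4 (code (a i)) ⟨i, rfl⟩ (a i) (k1 i) rfl hp)
  have hNP : Nonprincipal W := by
    intro p hp
    obtain ⟨a, k1, k2, k3, k4⟩ := (hWmem _).mp hp
    refine hxN (p:Ordinal) p.2 a k1 k2 k3 ?_
    intro γ hγ
    have hmem := k4 ⟨γ, hγ.2⟩ hγ.1
    exact Set.mem_singleton_iff.mpr (congrArg Subtype.val hmem)
  refine ⟨δ, hδκ, ⟨hℵδ, ?_⟩, ?_⟩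
  · rw [show δ.ord = β from hδord]
    exact ⟨W, hKC, hNP⟩
  · intro α hα
    have hαβ : α.ord < β := by
      rw [← hδord]
      exact Cardinal.ord_lt_ord.mpr hα
    obtain ⟨ρ, hρsc, hρ1, hρ2⟩ := hxL α.ord hαβ
    refine ⟨ρ, Cardinal.ord_lt_ord.mp hρ1, ?_, hρsc⟩
    exact Cardinal.ord_lt_ord.mp (by rw [hδord]; exact hρ2)
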